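/- arXiv:2505.01045 — 2 statements merged into one kernel-verified Lean document; each statement's English description precedes it below -/
import Mathlib

section
/- Let H be a complex Hilbert space and T : H →L[ℂ] H a bounded self-adjoint operator with 0 ≤ T, and for λ > 0 let R_λ = (λ•1 + T)⁻¹. Then for f ∈ H, λ • R_λ f → 0 as λ → 0⁺ if and only if f lies in the closure of the range of T. -/
/-!
The operators `λ R_λ` are contractions, since `λ‖x‖ ≤ ‖(λ + T) x‖` for positive `T`, and on the
range of `T` one has `λ R_λ (T x) = λ x - λ (λ R_λ x) = O(λ)`. Uniform boundedness makes the set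
of `f` with `λ R_λ f → 0` closed, so it contains `closure (range T)`. Conversely,
`f - T (R_λ f) = λ R_λ f` exhibits `f` as a limit of elements of the range.
-/

open scoped InnerProductSpace

variable {H : Type*} [NormedAddCommGroup H] [InnerProductSpace ℂ H] [CompleteSpace H]

/-- The resolventOp `R_λ = (λ • 1 + T)⁻¹` of `-T`, as `Ring.inverse`. -/
noncomputable def resolventOp (T : H →L[ℂ] H) (l : ℝ) : H →L[ℂ] H :=
  Ring.inverse (l • (1 : H →L[ℂ] H) + T)

open Filter Topology

lemma isUnit_algebraMap_add_of_nonneg {A : Type*} [Ring A] [PartialOrder A] [Algebra ℝ A]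
    [NonnegSpectrumClass ℝ A] {a : A} (ha : 0 ≤ a) {l : ℝ} (hl : 0 < l) :
    IsUnit (algebraMap ℝ A l + a) := by
  by_contra h
  have hmem : -l ∈ spectrum ℝ a := by
    rwa [spectrum.mem_iff, map_neg, ← neg_add', IsUnit.neg_iff]
  linarith [spectrum_nonneg_of_nonneg ha hmem]

lemma isClosed_setOf_tendsto_zero_of_eventually_norm_le {𝕜 E F ι : Type*}
    [NontriviallyNormedField 𝕜] [SeminormedAddCommGroup E] [SeminormedAddCommGroup F]
    [NormedSpace 𝕜 E] [NormedSpace 𝕜 F] {l : Filter ι} (A : ι → E →L[𝕜] F) {C : ℝ}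
    (hA : ∀ᶠ i in l, ∀ x, ‖A i x‖ ≤ C * ‖x‖) :
    IsClosed {x | Tendsto (fun i ↦ A i x) l (𝓝 0)} := by
  set s := {i | ∀ x, ‖A i x‖ ≤ C * ‖x‖}
  have hl : map ((↑) : s → ι) (comap (↑) l) = l := map_comap_of_mem (by rwa [Subtype.range_coe])
  have hequi : Equicontinuous ((↑) ∘ fun i : s ↦ A i) :=
    ((NormedSpace.equicontinuous_TFAE fun i : s ↦ A i).out 3 1).mp
      (⟨C, fun i ↦ i.2⟩ : ∃ C, ∀ (i : s) x, ‖A i x‖ ≤ C * ‖x‖)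
  convert hequi.isClosed_setOfPred_tendsto (l := comap (↑) l) (f := fun _ ↦ 0) continuous_const
    using 1
  ext x
  change Tendsto _ l _ ↔ Tendsto ((fun i ↦ A i x) ∘ Subtype.val) _ _
  rw [← tendsto_map'_iff, hl]

lemma ContinuousLinearMap.IsPositive.mul_norm_le_norm_smul_add_apply {𝕜 E : Type*} [RCLike 𝕜]
    [NormedAddCommGroup E] [InnerProductSpace 𝕜 E] {T : E →L[𝕜] E} (hT : T.IsPositive)
    (l : ℝ) (x : E) :
    l * ‖x‖ ≤ ‖(l : 𝕜) • x + T x‖ := by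
  have hcoercive : l * ‖x‖ ^ 2 ≤ RCLike.re ⟪(l : 𝕜) • x + T x, x⟫_𝕜 := by
    rw [inner_add_left, map_add, inner_smul_real_left, RCLike.smul_re, inner_self_eq_norm_sq]
    linarith [hT.re_inner_nonneg_left x]
  have := hcoercive.trans (re_inner_le_norm _ _)
  rcases (norm_nonneg x).eq_or_lt with hx | hx
  · simp [← hx]
  · nlinarith

section Resolvent

variable {E : Type*} [NormedAddCommGroup E] [InnerProductSpace ℂ E] {T : E →L[ℂ] E} {l : ℝ}

lemma isUnit_smul_one_add_of_nonneg [CompleteSpace E] (hT : 0 ≤ T) (hl : 0 < l) :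
    IsUnit (l • (1 : E →L[ℂ] E) + T) := by
  simpa [Algebra.algebraMap_eq_smul_one] using isUnit_algebraMap_add_of_nonneg hT hl

lemma smul_resolventOp_apply_add_apply_resolventOp [CompleteSpace E] (hT : 0 ≤ T) (hl : 0 < l)
    (y : E) : l • resolventOp T l y + T (resolventOp T l y) = y := by
  simpa [resolventOp] using
    DFunLike.congr_fun (Ring.mul_inverse_cancel _ (isUnit_smul_one_add_of_nonneg hT hl)) y

lemma resolventOp_apply_smul_add_apply [CompleteSpace E] (hT : 0 ≤ T) (hl : 0 < l) (x : E) :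
    resolventOp T l (l • x + T x) = x := by
  simpa [resolventOp] using
    DFunLike.congr_fun (Ring.inverse_mul_cancel _ (isUnit_smul_one_add_of_nonneg hT hl)) x

lemma sub_apply_resolventOp [CompleteSpace E] (hT : 0 ≤ T) (hl : 0 < l) (y : E) :
    y - T (resolventOp T l y) = l • resolventOp T l y :=
  (eq_sub_of_add_eq (smul_resolventOp_apply_add_apply_resolventOp hT hl y)).symm

lemma norm_smul_resolventOp_apply_le [CompleteSpace E] (hT : 0 ≤ T) (hl : 0 < l) (y : E) :
    ‖l • resolventOp T l y‖ ≤ ‖y‖ := by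
  calc ‖l • resolventOp T l y‖ = l * ‖resolventOp T l y‖ := by
        rw [norm_smul, Real.norm_of_nonneg hl.le]
    _ ≤ ‖(l : ℂ) • resolventOp T l y + T (resolventOp T l y)‖ :=
        (T.nonneg_iff_isPositive.mp hT).mul_norm_le_norm_smul_add_apply l _
    _ = ‖y‖ := by
        rw [Complex.coe_smul, smul_resolventOp_apply_add_apply_resolventOp hT hl]

lemma tendsto_smul_resolventOp_apply_apply [CompleteSpace E] (hT : 0 ≤ T) (x : E) :
    Tendsto (fun l : ℝ ↦ l • resolventOp T l (T x)) (𝓝[>] 0) (𝓝 0) := by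
  have hbound : ∀ᶠ l in 𝓝[>] (0 : ℝ), ‖l • resolventOp T l (T x)‖ ≤ 2 * l * ‖x‖ := by
    filter_upwards [self_mem_nhdsWithin] with l (hl : 0 < l)
    have hTx : resolventOp T l (T x) = x - l • resolventOp T l x := by
      rw [eq_sub_iff_add_eq, ← ContinuousLinearMap.map_smul_of_tower, ← map_add, add_comm,
        resolventOp_apply_smul_add_apply hT hl]
    calc ‖l • resolventOp T l (T x)‖ = ‖l • x - l • (l • resolventOp T l x)‖ := by
          rw [hTx, smul_sub]
      _ ≤ l * ‖x‖ + l * ‖l • resolventOp T l x‖ := by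
          grw [norm_sub_le, norm_smul, norm_smul, Real.norm_of_nonneg hl.le]
      _ ≤ 2 * l * ‖x‖ := by
          grw [norm_smul_resolventOp_apply_le hT hl x]
          linarith
  refine squeeze_zero_norm' hbound ?_
  simpa using (((tendsto_id : Tendsto id (𝓝 (0 : ℝ)) _).const_mul 2).mul_const ‖x‖).mono_left
    nhdsWithin_le_nhds

end Resolvent

theorem tendsto_smul_resolvent_iff_mem_closure_range_general (T : H →L[ℂ] H)
    (hpos : 0 ≤ T) (f : H) :
    Filter.Tendsto (fun l : ℝ => l • resolventOp T l f)
        (nhdsWithin 0 (Set.Ioi 0)) (nhds 0) ↔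
      f ∈ closure (Set.range T) := by
  constructor
  · intro h
    have hrange : Tendsto (fun l : ℝ ↦ T (resolventOp T l f)) (𝓝[>] 0) (𝓝 f) := by
      refine (sub_zero f ▸ tendsto_const_nhds.sub h).congr' ?_
      filter_upwards [self_mem_nhdsWithin] with l (hl : 0 < l)
      rw [← sub_apply_resolventOp hpos hl, sub_sub_cancel]
    exact mem_closure_of_tendsto hrange (Eventually.of_forall fun l ↦ Set.mem_range_self _)
  · intro hf
    have hclosed := isClosed_setOf_tendsto_zero_of_eventually_norm_le
      (fun l : ℝ ↦ l • resolventOp T l) (C := 1) (l := 𝓝[>] 0) <| by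
        filter_upwards [self_mem_nhdsWithin] with l (hl : 0 < l) y
        simpa using norm_smul_resolventOp_apply_le hpos hl y
    exact closure_minimal
      (Set.range_subset_iff.mpr fun x ↦ tendsto_smul_resolventOp_apply_apply hpos x) hclosed hf

/-- Komatsu's equivalence: `λ • R_λ f → 0` as `λ → 0⁺` iff `f` lies in the closure of
the range of `T`. -/
theorem tendsto_smul_resolvent_iff_mem_closure_range (T : H →L[ℂ] H)
    (hT : IsSelfAdjoint T) (hpos : 0 ≤ T) (f : H) :
    Filter.Tendsto (fun l : ℝ => l • resolventOp T l f)
        (nhdsWithin 0 (Set.Ioi 0)) (nhds 0) ↔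
      f ∈ closure (Set.range T) :=
  tendsto_smul_resolvent_iff_mem_closure_range_general T hpos f
end

section
/- Let H be a complex Hilbert space and T : H →L[ℂ] H a bounded self-adjoint operator with 0 ≤ T, and for λ > 0 let R_λ = (λ•1 + T)⁻¹. Let (λ_n)_{n≥1} be a sequence of positive reals with n · λ_n → 0 as n → ∞. Then for every g ∈ H and f = √T g, one has √n · λ_n · ‖R_{λ_n} f‖ → 0 as n → ∞. -/
/-!
With `x = R_λ g` we have `g = λ x + T x` and, since `√T` commutes with `R_λ`,
`R_λ (√T g) = √T x` with `‖√T x‖² = re ⟪T x, x⟫`. The inequality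
`4 re ⟪a, b⟫ ≤ ‖a + b‖²` applied to `a = T x`, `b = λ x` gives
`λ² ‖R_λ (√T g)‖² ≤ (λ / 4) ‖g‖²`, so `√n λₙ ‖R_{λₙ} (√T g)‖ ≤ √(n λₙ) ‖g‖ / 2 → 0`.
-/

open scoped InnerProductSpace

variable {H : Type*} [NormedAddCommGroup H] [InnerProductSpace ℂ H] [CompleteSpace H]

theorem four_mul_re_inner_le_norm_add_sq {𝕜 E : Type*} [RCLike 𝕜] [SeminormedAddCommGroup E]
    [InnerProductSpace 𝕜 E] (x y : E) : 4 * RCLike.re ⟪x, y⟫_𝕜 ≤ ‖x + y‖ ^ 2 := by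
  nlinarith [norm_add_sq (𝕜 := 𝕜) x y, norm_sub_sq (𝕜 := 𝕜) x y, sq_nonneg ‖x - y‖]

theorem Commute.ringInverse_right {M₀ : Type*} [MonoidWithZero M₀] {a b : M₀}
    (h : Commute a b) : Commute a (Ring.inverse b) := by
  by_cases hb : IsUnit b
  · obtain ⟨u, rfl⟩ := hb
    rw [Ring.inverse_unit]
    exact h.units_inv_right
  · rw [Ring.inverse_non_unit b hb]
    exact Commute.zero_right a

theorem ContinuousLinearMap.four_mul_re_inner_le_norm_smul_one_add_apply_sq {E : Type*}
    [NormedAddCommGroup E] [InnerProductSpace ℂ E] (T : E →L[ℂ] E) (l : ℝ) (x : E) :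
    4 * l * RCLike.re ⟪T x, x⟫_ℂ ≤ ‖(l • (1 : E →L[ℂ] E) + T) x‖ ^ 2 := by
  have h := four_mul_re_inner_le_norm_add_sq (𝕜 := ℂ) (T x) ((l : ℂ) • x)
  rw [inner_smul_right, RCLike.re_to_complex, Complex.re_ofReal_mul, Complex.coe_smul,
    add_comm] at h
  simpa [mul_assoc] using h

section Resolvent

variable {T : H →L[ℂ] H}

theorem ContinuousLinearMap.norm_sqrt_apply_sq (hT : 0 ≤ T) (x : H) :
    ‖CFC.sqrt T x‖ ^ 2 = RCLike.re ⟪T x, x⟫_ℂ := by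
  have hS : IsSelfAdjoint (CFC.sqrt T) := IsSelfAdjoint.of_nonneg (CFC.sqrt_nonneg T)
  calc ‖CFC.sqrt T x‖ ^ 2 = RCLike.re ⟪CFC.sqrt T x, CFC.sqrt T x⟫_ℂ :=
        (inner_self_eq_norm_sq _).symm
    _ = RCLike.re ⟪CFC.sqrt T (CFC.sqrt T x), x⟫_ℂ := congrArg _ (hS.isSymmetric _ _).symm
    _ = RCLike.re ⟪T x, x⟫_ℂ :=
        congrArg (fun A => RCLike.re ⟪A x, x⟫_ℂ) (CFC.sqrt_mul_sqrt_self T hT)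

theorem smul_one_add_apply_resolventOp_apply (hT : 0 ≤ T) {l : ℝ} (hl : 0 < l) (g : H) :
    (l • (1 : H →L[ℂ] H) + T) (resolventOp T l g) = g := by
  have hunit : IsUnit (l • (1 : H →L[ℂ] H) + T) := by
    rw [← Algebra.algebraMap_eq_smul_one]
    exact ((isStrictlyPositive_algebraMap hl).add_nonneg hT).isUnit
  exact DFunLike.congr_fun (Ring.mul_inverse_cancel _ hunit) g

theorem commute_sqrt_resolventOp (hT : 0 ≤ T) (l : ℝ) :
    Commute (CFC.sqrt T) (resolventOp T l) := by
  have hST : Commute (CFC.sqrt T) T := by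
    have := (Commute.refl (CFC.sqrt T)).mul_right (Commute.refl _)
    rwa [CFC.sqrt_mul_sqrt_self T hT] at this
  exact (((Commute.one_right _).smul_right l).add_right hST).ringInverse_right

theorem mul_norm_resolventOp_sqrt_apply_le (hT : 0 ≤ T) {l : ℝ} (hl : 0 < l) (g : H) :
    l * ‖resolventOp T l (CFC.sqrt T g)‖ ≤ √l / 2 * ‖g‖ := by
  set x := resolventOp T l g
  have hsq : (l * ‖CFC.sqrt T x‖) ^ 2 ≤ (√l / 2 * ‖g‖) ^ 2 :=
    calc (l * ‖CFC.sqrt T x‖) ^ 2 = l / 4 * (4 * l * RCLike.re ⟪T x, x⟫_ℂ) := by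
          rw [mul_pow, T.norm_sqrt_apply_sq hT]; ring
      _ ≤ l / 4 * ‖(l • (1 : H →L[ℂ] H) + T) x‖ ^ 2 := by
          gcongr; exact T.four_mul_re_inner_le_norm_smul_one_add_apply_sq l x
      _ = (√l / 2 * ‖g‖) ^ 2 := by
          rw [smul_one_add_apply_resolventOp_apply hT hl, mul_pow, div_pow,
            Real.sq_sqrt hl.le]
          ring
  have hcomm : resolventOp T l (CFC.sqrt T g) = CFC.sqrt T x :=
    DFunLike.congr_fun (commute_sqrt_resolventOp hT l).eq.symm g
  rw [hcomm]
  exact le_of_pow_le_pow_left₀ two_ne_zero (by positivity) hsq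

end Resolvent

open Filter Topology

theorem tendsto_sqrt_n_lambda_norm_resolvent_general (T : H →L[ℂ] H)
    (hpos : 0 ≤ T) (lam : ℕ → ℝ) (hlam : ∀ n, 0 < lam n)
    (hlim : Filter.Tendsto (fun n : ℕ => (n : ℝ) * lam n) Filter.atTop (nhds 0))
    (g : H) :
    Filter.Tendsto
      (fun n : ℕ => Real.sqrt n * lam n * ‖resolventOp T (lam n) (CFC.sqrt T g)‖)
      Filter.atTop (nhds 0) := by
  have hbound (n : ℕ) : √n * lam n * ‖resolventOp T (lam n) (CFC.sqrt T g)‖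
      ≤ √(n * lam n) / 2 * ‖g‖ :=
    calc √n * lam n * ‖resolventOp T (lam n) (CFC.sqrt T g)‖
        = √n * (lam n * ‖resolventOp T (lam n) (CFC.sqrt T g)‖) := mul_assoc _ _ _
      _ ≤ √n * (√(lam n) / 2 * ‖g‖) :=
          mul_le_mul_of_nonneg_left (mul_norm_resolventOp_sqrt_apply_le hpos (hlam n) g)
            (Real.sqrt_nonneg _)
      _ = √(n * lam n) / 2 * ‖g‖ := by rw [Real.sqrt_mul n.cast_nonneg]; ring
  have hmajorant : Tendsto (fun n : ℕ => √(n * lam n) / 2 * ‖g‖) atTop (𝓝 0) := by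
    simpa using (hlim.sqrt.div_const 2).mul_const ‖g‖
  exact squeeze_zero (fun n => by have := (hlam n).le; positivity) hbound hmajorant

/-- Deterministic core of the tuning-sequence argument: if `n · λₙ → 0` with `λₙ > 0`,
then `√n · λₙ · ‖R_{λₙ} (√T g)‖ → 0`. -/
theorem tendsto_sqrt_n_lambda_norm_resolvent (T : H →L[ℂ] H) (hT : IsSelfAdjoint T)
    (hpos : 0 ≤ T) (lam : ℕ → ℝ) (hlam : ∀ n, 0 < lam n)
    (hlim : Filter.Tendsto (fun n : ℕ => (n : ℝ) * lam n) Filter.atTop (nhds 0))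
    (g : H) :
    Filter.Tendsto
      (fun n : ℕ => Real.sqrt n * lam n * ‖resolventOp T (lam n) (CFC.sqrt T g)‖)
      Filter.atTop (nhds 0) :=
  tendsto_sqrt_n_lambda_norm_resolvent_general T hpos lam hlam hlim g
end
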